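/- arXiv:cond-mat/0205455 — 2 statements merged into one kernel-verified Lean document; each statement's English description precedes it below -/
import Mathlib

section
/- For every integer L ≥ 2, every β ≥ 0 and every ε with 0 < ε ≤ 1/2, the toy-model partition function satisfies the 'ordered' lower bound Z_Λ(β,ε) ≥ (ε/2)^{L²} · exp(2βL²). -/
open MeasureTheory Real

/-- The site space: the discrete torus of side `L`. -/
abbrev Torus (L : ℕ) := ZMod L × ZMod L

/-- A configuration of the toy model: one circle-valued spin per site. -/
abbrev Config (L : ℕ) := Torus L → AddCircle (1 : ℝ)

/-- The two unit coordinate vectors `e₁ = (1,0)` and `e₂ = (0,1)`. -/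
def coordVec (L : ℕ) : Fin 2 → Torus L
  | 0 => (1, 0)
  | 1 => (0, 1)

/-- The product of normalized Haar measures on the spins. -/
noncomputable def toyMeasure (L : ℕ) [NeZero L] : Measure (Config L) :=
  Measure.pi fun _ => (AddCircle.haarAddCircle : Measure (AddCircle (1 : ℝ)))

/-- A bond `(x, x + eᵢ)` of the configuration `φ` is `ε`-ordered when
`‖φ x - φ (x + eᵢ)‖ ≤ ε/2`, where `‖·‖` is the quotient norm on `ℝ/ℤ`. -/
def IsOrderedBond (L : ℕ) [NeZero L] (ε : ℝ) (φ : Config L) (x : Torus L) (i : Fin 2) : Prop :=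
  ‖φ x - φ (x + coordVec L i)‖ ≤ ε / 2

noncomputable instance (L : ℕ) [NeZero L] (ε : ℝ) (φ : Config L) (x : Torus L) (i : Fin 2) :
    Decidable (IsOrderedBond L ε φ x i) :=
  Real.decidableLE _ _

/-- The toy Hamiltonian: minus the number of `ε`-ordered bonds. -/
noncomputable def toyH (L : ℕ) [NeZero L] (ε : ℝ) (φ : Config L) : ℝ :=
  -(∑ x : Torus L, ∑ i : Fin 2, if IsOrderedBond L ε φ x i then (1 : ℝ) else 0)

/-- The toy-model partition function. -/
noncomputable def toyZ (L : ℕ) [NeZero L] (β ε : ℝ) : ℝ :=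
  ∫ φ, Real.exp (-β * toyH L ε φ) ∂(toyMeasure L)

theorem AddCircle.haarAddCircle_closedBall {T : ℝ} [Fact (0 < T)] (x : AddCircle T) (r : ℝ) :
    haarAddCircle (Metric.closedBall x r) = ENNReal.ofReal (min 1 (2 * r / T)) := by
  have hT : 0 < T := Fact.out
  have hvol := AddCircle.volume_closedBall (T := T) (x := x) r
  rw [AddCircle.volume_eq_smul_haarAddCircle, Measure.smul_apply, smul_eq_mul] at hvol
  have hmin : min 1 (2 * r / T) = min T (2 * r) / T := by
    rw [← min_div_div_right hT.le, div_self hT.ne']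
  rw [hmin, ENNReal.ofReal_div_of_pos hT,
    ENNReal.eq_div_iff (by simpa using hT) ENNReal.ofReal_ne_top, hvol]

section ToyModel

variable {L : ℕ} [NeZero L]

instance : IsProbabilityMeasure (toyMeasure L) := by
  rw [toyMeasure]; infer_instance

lemma measurable_toyH (ε : ℝ) : Measurable (toyH L ε) := by
  refine (Finset.measurable_sum _ fun x _ => Finset.measurable_sum _ fun i _ => ?_).neg
  have hgap : Continuous fun φ : Config L => ‖φ x - φ (x + coordVec L i)‖ := by fun_prop
  have hbond : MeasurableSet {φ : Config L | IsOrderedBond L ε φ x i} :=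
    measurableSet_le hgap.measurable measurable_const
  exact Measurable.ite hbond measurable_const measurable_const

lemma abs_toyH_le (ε : ℝ) (φ : Config L) : |toyH L ε φ| ≤ 2 * L ^ 2 := by
  have hcount : ∑ x : Torus L, ∑ i : Fin 2, (if IsOrderedBond L ε φ x i then (1 : ℝ) else 0)
      ≤ 2 * L ^ 2 :=
    calc _ ≤ ∑ _x : Torus L, ∑ _i : Fin 2, (1 : ℝ) :=
          Finset.sum_le_sum fun _ _ => Finset.sum_le_sum fun _ _ => by split <;> norm_num
      _ = 2 * L ^ 2 := by simp [sq, mul_comm]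
  have hnonneg : 0 ≤ ∑ x : Torus L, ∑ i : Fin 2,
      (if IsOrderedBond L ε φ x i then (1 : ℝ) else 0) :=
    Finset.sum_nonneg fun _ _ => Finset.sum_nonneg fun _ _ => by split <;> norm_num
  rwa [toyH, abs_neg, abs_of_nonneg hnonneg]

lemma integrable_exp_toyH (β ε : ℝ) :
    Integrable (fun φ => Real.exp (-β * toyH L ε φ)) (toyMeasure L) := by
  refine .of_bound ((measurable_exp.comp ((measurable_toyH ε).const_mul _)).aestronglyMeasurable)
    (Real.exp (|β| * (2 * L ^ 2))) (ae_of_all _ fun φ => ?_)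
  rw [Real.norm_of_nonneg (exp_pos _).le, exp_le_exp]
  calc -β * toyH L ε φ ≤ |β| * |toyH L ε φ| := by
        rw [← abs_neg β, ← abs_mul]; exact le_abs_self _
    _ ≤ |β| * (2 * L ^ 2) := mul_le_mul_of_nonneg_left (abs_toyH_le ε φ) (abs_nonneg β)

lemma isOrderedBond_of_forall_norm_le {ε : ℝ} {φ : Config L} (hφ : ∀ x, ‖φ x‖ ≤ ε / 4)
    (x : Torus L) (i : Fin 2) : IsOrderedBond L ε φ x i :=
  calc ‖φ x - φ (x + coordVec L i)‖ ≤ ‖φ x‖ + ‖φ (x + coordVec L i)‖ := norm_sub_le _ _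
    _ ≤ ε / 4 + ε / 4 := add_le_add (hφ _) (hφ _)
    _ = ε / 2 := by ring

lemma toyH_of_forall_norm_le {ε : ℝ} {φ : Config L} (hφ : ∀ x, ‖φ x‖ ≤ ε / 4) :
    toyH L ε φ = -(2 * L ^ 2) := by
  simp [toyH, isOrderedBond_of_forall_norm_le hφ, sq, mul_comm]

lemma toyMeasure_real_pi_closedBall {r : ℝ} (hr : 0 ≤ r) (hr' : r ≤ 1 / 2) :
    (toyMeasure L).real (Set.univ.pi fun _ => Metric.closedBall 0 r) = (2 * r) ^ (L ^ 2) := by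
  have : Fact ((0 : ℝ) < 1) := ⟨one_pos⟩
  rw [Measure.real, toyMeasure, Measure.pi_pi]
  simp [AddCircle.haarAddCircle_closedBall, min_eq_right (by linarith : 2 * r ≤ 1), sq,
    ENNReal.toReal_ofReal hr]

end ToyModel

-- The lower bound is the contribution of the configurations with all spins within `ε/4` of `0`:
-- they have measure `(ε/2)^{L²}` and all `2L²` bonds ordered.
/-- the 'ordered' lower bound on the toy-model partition function. -/
theorem toy_ordered_lower_bound (L : ℕ) (hL : 2 ≤ L) (β ε : ℝ)
    (hε : 0 < ε) (hε' : ε ≤ 1 / 2) :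
    haveI : NeZero L := ⟨by omega⟩
    toyZ L β ε ≥ (ε / 2) ^ (L ^ 2) * Real.exp (2 * β * L ^ 2) := by
  have : NeZero L := ⟨by omega⟩
  set A : Set (Config L) := Set.univ.pi fun _ => Metric.closedBall 0 (ε / 4)
  have hA : MeasurableSet A := .univ_pi fun _ => Metric.isClosed_closedBall.measurableSet
  have hμA : (toyMeasure L).real A = (ε / 2) ^ (L ^ 2) := by
    rw [toyMeasure_real_pi_closedBall (by linarith) (by linarith)]
    ring_nf
  have hconst : ∀ φ ∈ A, Real.exp (2 * β * L ^ 2) ≤ Real.exp (-β * toyH L ε φ) := fun φ hφ => by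
    rw [toyH_of_forall_norm_le fun x => by simpa using hφ x (Set.mem_univ x)]
    exact le_of_eq (by ring_nf)
  calc (ε / 2) ^ (L ^ 2) * Real.exp (2 * β * L ^ 2)
      = Real.exp (2 * β * L ^ 2) * (toyMeasure L).real A := by rw [hμA, mul_comm]
    _ ≤ ∫ φ in A, Real.exp (-β * toyH L ε φ) ∂toyMeasure L :=
      setIntegral_ge_of_const_le_real hA (measure_ne_top _ _) hconst
        (integrable_exp_toyH β ε).integrableOn
    _ ≤ toyZ L β ε :=
      setIntegral_le_integral (integrable_exp_toyH β ε) (ae_of_all _ fun _ => (exp_pos _).le)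
end

section
/- There exists a constant c ≥ 0 with the following property. For every integer L ≥ 4 divisible by 4 and every ε with 0 < ε < 1/4, the μ-measure of the set A^# of configurations φ such that every bond in E₀₁ is ε-ordered and every bond in E₂₃ is ε-disordered satisfies μ(A^#) ≤ ε^{(3/4)L² − cL}. -/
open MeasureTheory Real

/-- The residue `(x₁ + x₂) mod 4` of a site of the torus, well defined when `4 ∣ L`. -/
def residue4 (L : ℕ) (h : (4 : ℕ) ∣ L) (x : Torus L) : ZMod 4 :=
  ZMod.castHom h (ZMod 4) (x.1 + x.2)

/-- A bond `(x, x + eᵢ)` belongs to `E₀₁` iff `(x₁ + x₂) mod 4 ∈ {0, 1}`. -/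
def InE01 (L : ℕ) (h : (4 : ℕ) ∣ L) (x : Torus L) : Prop :=
  residue4 L h x = 0 ∨ residue4 L h x = 1

/-- The chessboard event `A^#`: every bond of `E₀₁` is `ε`-ordered and every bond
of `E₂₃` is `ε`-disordered. -/
def Asharp (L : ℕ) [NeZero L] (h : (4 : ℕ) ∣ L) (ε : ℝ) : Set (Config L) :=
  {φ | ∀ x : Torus L, ∀ i : Fin 2,
    (InE01 L h x → IsOrderedBond L ε φ x i) ∧ (¬ InE01 L h x → ¬ IsOrderedBond L ε φ x i)}


/-!
On `A^#` every bond of `E₀₁` is `ε`-ordered, and these bonds contain a forest with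
`3L²/4 - O(L)` edges. Give each edge the orientation child → parent along a height function
that decreases towards the roots. Integrating out the spins in order of decreasing height, each
child spin is confined to the arc of length `ε` around its parent's spin, so every edge of the
forest contributes a factor `ε`.
-/

open Finset Function

theorem ZMod.val_sub_one_lt {n : ℕ} [NeZero n] {a : ZMod n} (ha : a ≠ 0) :
    (a - 1).val < a.val := by
  have hn : n ≠ 1 := by
    rintro rfl
    exact ha (Subsingleton.elim _ _)
  have hpos : 0 < a.val := ZMod.val_pos.mpr ha
  rw [ZMod.val_sub (by rw [ZMod.val_one'' hn]; omega), ZMod.val_one'' hn]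
  omega

theorem AddMonoidHom.card_mul_card_fiber {G H : Type*} [AddGroup G] [Fintype G] [AddGroup H]
    [Fintype H] [DecidableEq H] (f : G →+ H) (hf : Surjective f) (k : H) :
    Fintype.card H * #{g | f g = k} = Fintype.card G := by
  have hfib : ∀ k', #{g | f g = k'} = #{g | f g = k} := fun k' =>
    AddMonoidHom.card_fiber_eq_of_mem_range f (hf k') (hf k)
  calc Fintype.card H * #{g | f g = k} = ∑ k', #{g | f g = k'} := by simp [hfib]
    _ = Fintype.card G := (card_eq_sum_card_fiberwise fun g _ => mem_univ (f g)).symm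

theorem AddCircle.haarAddCircle_setOf_norm_sub_le (b : AddCircle (1 : ℝ)) (r : ℝ) :
    AddCircle.haarAddCircle {a | ‖a - b‖ ≤ r} ≤ ENNReal.ofReal (2 * r) := by
  have hball : {a | ‖a - b‖ ≤ r} = Metric.closedBall b r := by
    ext a
    simp [dist_eq_norm]
  rw [hball]
  calc AddCircle.haarAddCircle (Metric.closedBall b r) = volume (Metric.closedBall b r) := by
        simp [AddCircle.volume_eq_smul_haarAddCircle]
    _ = ENNReal.ofReal (min 1 (2 * r)) := AddCircle.volume_closedBall _ _
    _ ≤ ENNReal.ofReal (2 * r) := ENNReal.ofReal_le_ofReal (min_le_right _ _)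

namespace MeasureTheory.Measure

variable {ι α : Type*} [Fintype ι] [DecidableEq ι] [MeasurableSpace α]

theorem pi_inter_le_mul (ν : Measure α) [IsProbabilityMeasure ν] {S B : Set (ι → α)}
    (hS : MeasurableSet S) (hB : MeasurableSet B) (i : ι)
    (hSi : ∀ φ a, update φ i a ∈ S ↔ φ ∈ S) {δ : ENNReal}
    (hδ : ∀ φ, ν {a | update φ i a ∈ B} ≤ δ) :
    Measure.pi (fun _ => ν) (S ∩ B) ≤ δ * Measure.pi (fun _ => ν) S := by
  have hsection : ∀ φ, ν (update φ i ⁻¹' (S ∩ B)) ≤ ∫⁻ a, δ * S.indicator 1 (update φ i a) ∂ν := by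
    intro φ
    by_cases hφ : φ ∈ S
    · simpa [Set.preimage, hSi, hφ] using hδ φ
    · simp [Set.preimage, hSi, hφ]
  rw [← lintegral_indicator_one (hS.inter hB), ← lintegral_indicator_one hS,
    ← lintegral_const_mul _ (measurable_one.indicator hS)]
  refine lintegral_le_of_lmarginal_le {i} (measurable_one.indicator (hS.inter hB))
    ((measurable_one.indicator hS).const_mul δ) fun φ => ?_
  simp only [lmarginal_singleton]
  exact (lintegral_indicator_one (measurable_update φ (hS.inter hB))).trans_le (hsection φ)

theorem pi_forest_le_pow (ν : Measure α) [IsProbabilityMeasure ν] {R : Set (α × α)}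
    (hR : MeasurableSet R) {δ : ENNReal} (hδ : ∀ b, ν {a | (a, b) ∈ R} ≤ δ)
    (parent : ι → ι) (height : ι → ℕ) (C : Finset ι)
    (hC : ∀ x ∈ C, height (parent x) < height x) :
    Measure.pi (fun _ => ν) {φ | ∀ x ∈ C, (φ x, φ (parent x)) ∈ R} ≤ δ ^ #C := by
  have hmeas : ∀ s : Finset ι, MeasurableSet {φ : ι → α | ∀ x ∈ s, (φ x, φ (parent x)) ∈ R} :=
    fun s => by
      simp only [Set.ofPred_forall]
      exact s.measurableSet_biInter fun x _ =>
        ((measurable_pi_apply x).prodMk (measurable_pi_apply (parent x))) hR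
  induction C using Finset.strongInduction with | H C ih =>
  rcases C.eq_empty_or_nonempty with rfl | hne
  · simp
  obtain ⟨x₀, hx₀, hmax⟩ := exists_max_image C height hne
  have hroot : parent x₀ ≠ x₀ := fun h => (hC x₀ hx₀).ne (congrArg height h)
  -- a vertex of maximal height is nobody's parent, so its spin enters only its own constraint
  have hfresh : ∀ x ∈ C.erase x₀, x ≠ x₀ ∧ parent x ≠ x₀ := fun x hx =>
    ⟨ne_of_mem_erase hx, fun h => ((hC x (mem_of_mem_erase hx)).trans_le
      (h ▸ hmax x (mem_of_mem_erase hx))).false⟩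
  have hsplit : {φ : ι → α | ∀ x ∈ C, (φ x, φ (parent x)) ∈ R} =
      {φ | ∀ x ∈ C.erase x₀, (φ x, φ (parent x)) ∈ R} ∩ {φ | (φ x₀, φ (parent x₀)) ∈ R} := by
    conv_lhs => rw [← insert_erase hx₀]
    ext φ
    simp [and_comm]
  calc Measure.pi (fun _ => ν) {φ | ∀ x ∈ C, (φ x, φ (parent x)) ∈ R}
      ≤ δ * Measure.pi (fun _ => ν) {φ | ∀ x ∈ C.erase x₀, (φ x, φ (parent x)) ∈ R} := by
        rw [hsplit]
        refine pi_inter_le_mul ν (hmeas _)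
          (((measurable_pi_apply x₀).prodMk (measurable_pi_apply (parent x₀))) hR) x₀ ?_ fun φ => ?_
        · intro φ a
          refine forall₂_congr fun x hx => ?_
          rw [update_of_ne (hfresh x hx).1, update_of_ne (hfresh x hx).2]
        · simpa [update_of_ne hroot] using hδ (φ (parent x₀))
    _ ≤ δ * δ ^ #(C.erase x₀) := by
        gcongr
        exact ih _ (erase_ssubset hx₀) fun x hx => hC x (mem_of_mem_erase hx)
    _ = δ ^ #C := by rw [← pow_succ', card_erase_add_one hx₀]

end MeasureTheory.Measure

section Chessboard

variable {L : ℕ} (hdvd : 4 ∣ L)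

theorem residue4_add (x y : Torus L) :
    residue4 L hdvd (x + y) = residue4 L hdvd x + residue4 L hdvd y := by
  simp only [residue4, Prod.fst_add, Prod.snd_add, map_add]
  ring

theorem residue4_sub (x y : Torus L) :
    residue4 L hdvd (x - y) = residue4 L hdvd x - residue4 L hdvd y := by
  rw [eq_sub_iff_add_eq, ← residue4_add, sub_add_cancel]

theorem residue4_coordVec (i : Fin 2) : residue4 L hdvd (coordVec L i) = 1 := by
  fin_cases i <;> simp only [residue4, coordVec, add_zero, zero_add, map_one]

theorem four_mul_card_residue4_eq [NeZero L] (k : ZMod 4) :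
    4 * #{x | residue4 L hdvd x = k} = L ^ 2 := by
  let f : Torus L →+ ZMod 4 := (ZMod.castHom hdvd (ZMod 4)).toAddMonoidHom.comp
    ((AddMonoidHom.id _).coprod (AddMonoidHom.id _))
  have hf : Surjective f := fun k => by
    obtain ⟨s, hs⟩ := ZMod.castHom_surjective hdvd k
    exact ⟨(s, 0), by simpa [f] using hs⟩
  convert f.card_mul_card_fiber hf k using 1
  · congr 2
  · rw [Fintype.card_prod, ZMod.card, sq]

/- A forest in the bonds of `E₀₁`: a site of residue `0` or `2` hangs from the residue-`1` site
`x ± e₂` next to it, and a residue-`1` site hangs from its residue-`0` neighbour `x - e₁`, except on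
the column `x₁ = 0`, which holds the roots. Residue-`3` sites touch no bond of `E₀₁`. -/
def chessboardParent (x : Torus L) : Torus L :=
  if residue4 L hdvd x = 0 then x + coordVec L 1
  else if residue4 L hdvd x = 1 then x - coordVec L 0
  else x - coordVec L 1

def chessboardHeight (x : Torus L) : ℕ :=
  2 * x.1.val + if residue4 L hdvd x = 1 then 0 else 1

def chessboardForest [NeZero L] : Finset (Torus L) :=
  {x | residue4 L hdvd x ≠ 3 ∧ ¬(residue4 L hdvd x = 1 ∧ x.1 = 0)}

variable {hdvd} in
theorem chessboardParent_of_residue4_eq_zero {x : Torus L} (h : residue4 L hdvd x = 0) :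
    chessboardParent hdvd x = x + coordVec L 1 :=
  if_pos h

variable {hdvd} in
theorem chessboardParent_of_residue4_eq_one {x : Torus L} (h : residue4 L hdvd x = 1) :
    chessboardParent hdvd x = x - coordVec L 0 := by
  simp +decide [chessboardParent, h]

variable {hdvd} in
theorem chessboardParent_of_residue4_eq_two {x : Torus L} (h : residue4 L hdvd x = 2) :
    chessboardParent hdvd x = x - coordVec L 1 := by
  simp +decide [chessboardParent, h]

variable [NeZero L]

theorem chessboardHeight_parent_lt {x : Torus L} (hx : x ∈ chessboardForest hdvd) :
    chessboardHeight hdvd (chessboardParent hdvd x) < chessboardHeight hdvd x := by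
  simp only [chessboardForest, mem_filter, mem_univ, true_and] at hx
  rcases (by decide : ∀ r : ZMod 4, r = 0 ∨ r = 1 ∨ r = 2 ∨ r = 3) (residue4 L hdvd x)
    with h | h | h | h
  · rw [chessboardHeight, chessboardHeight, chessboardParent_of_residue4_eq_zero h, residue4_add,
      residue4_coordVec, h]
    simp +decide [coordVec]
  · have := ZMod.val_sub_one_lt (hx.2 ⟨h, ·⟩)
    rw [chessboardHeight, chessboardHeight, chessboardParent_of_residue4_eq_one h, residue4_sub,
      residue4_coordVec, h]
    simp +decide [coordVec]
    omega
  · rw [chessboardHeight, chessboardHeight, chessboardParent_of_residue4_eq_two h, residue4_sub,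
      residue4_coordVec, h]
    simp +decide [coordVec]
  · exact absurd h hx.1

theorem norm_sub_chessboardParent_le {ε : ℝ} {φ : Config L} (hφ : φ ∈ Asharp L hdvd ε)
    {x : Torus L} (hx : x ∈ chessboardForest hdvd) :
    ‖φ x - φ (chessboardParent hdvd x)‖ ≤ ε / 2 := by
  have hfwd : ∀ i, InE01 L hdvd x → ‖φ x - φ (x + coordVec L i)‖ ≤ ε / 2 :=
    fun i hy => (hφ x i).1 hy
  have hbwd : ∀ i, InE01 L hdvd (x - coordVec L i) → ‖φ x - φ (x - coordVec L i)‖ ≤ ε / 2 :=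
    fun i hy => by simpa [IsOrderedBond, norm_sub_rev] using (hφ _ i).1 hy
  simp only [chessboardForest, mem_filter, mem_univ, true_and] at hx
  rcases (by decide : ∀ r : ZMod 4, r = 0 ∨ r = 1 ∨ r = 2 ∨ r = 3) (residue4 L hdvd x)
    with h | h | h | h
  · rw [chessboardParent_of_residue4_eq_zero h]
    exact hfwd 1 (Or.inl h)
  · rw [chessboardParent_of_residue4_eq_one h]
    exact hbwd 0 (Or.inl (by rw [residue4_sub, h, residue4_coordVec, sub_self]))
  · rw [chessboardParent_of_residue4_eq_two h]
    exact hbwd 1 (Or.inr (by rw [residue4_sub, h, residue4_coordVec]; decide))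
  · exact absurd h hx.1

theorem three_mul_sq_le_card_chessboardForest :
    3 * L ^ 2 ≤ 4 * (#(chessboardForest hdvd) + L) := by
  have hthree := four_mul_card_residue4_eq hdvd 3
  have hsplit : #{x : Torus L | residue4 L hdvd x ≠ 3} + #{x | residue4 L hdvd x = 3} = L ^ 2 := by
    rw [add_comm, card_filter_add_card_filter_not, card_univ, Fintype.card_prod, ZMod.card, sq]
  have hcover : #{x : Torus L | residue4 L hdvd x ≠ 3} ≤
      #(chessboardForest hdvd) + #{x : Torus L | x.1 = 0} :=
    (card_le_card fun x hx => by
      by_cases h0 : x.1 = 0 <;> simp_all [chessboardForest]).trans (card_union_le _ _)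
  have hcolumn : #{x : Torus L | x.1 = 0} ≤ L := by
    calc #{x : Torus L | x.1 = 0} ≤ #(univ : Finset (ZMod L)) :=
          card_le_card_of_injOn Prod.snd (fun x _ => mem_univ x.2)
            fun x hx y hy hxy => Prod.ext (by simp_all) hxy
      _ = L := by simp
  omega

end Chessboard

/-- the chessboard event `A^#` has measure at most `ε^{(3/4)L² − cL}`. -/
theorem toy_Asharp_measure_upper_bound :
    ∃ c : ℝ, 0 ≤ c ∧ ∀ L : ℕ, ∀ hdvd : (4 : ℕ) ∣ L, ∀ hL : 4 ≤ L,
      ∀ ε : ℝ, 0 < ε → ε < 1 / 4 →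
      haveI : NeZero L := ⟨by omega⟩
      toyMeasure L (Asharp L hdvd ε) ≤
        ENNReal.ofReal (ε ^ ((3 / 4 : ℝ) * (L : ℝ) ^ 2 - c * L)) := by
  refine ⟨1, zero_le_one, fun L hdvd hL ε hε hε₄ => ?_⟩
  have : NeZero L := ⟨by omega⟩
  let R : Set (AddCircle (1 : ℝ) × AddCircle (1 : ℝ)) := {p | ‖p.1 - p.2‖ ≤ ε / 2}
  have hR : MeasurableSet R := measurableSet_le (measurable_fst.sub measurable_snd).norm
    measurable_const
  have hslice : ∀ b, AddCircle.haarAddCircle {a | (a, b) ∈ R} ≤ ENNReal.ofReal ε := fun b => by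
    simpa [R, mul_div_cancel₀] using AddCircle.haarAddCircle_setOf_norm_sub_le b (ε / 2)
  have hcard : (3 / 4 : ℝ) * (L : ℝ) ^ 2 - 1 * L ≤ #(chessboardForest hdvd) := by
    have := three_mul_sq_le_card_chessboardForest hdvd
    have : (3 : ℝ) * L ^ 2 ≤ 4 * (#(chessboardForest hdvd) + L) := by exact_mod_cast this
    linarith
  calc toyMeasure L (Asharp L hdvd ε)
      ≤ Measure.pi (fun _ => AddCircle.haarAddCircle)
          {φ : Config L | ∀ x ∈ chessboardForest hdvd, (φ x, φ (chessboardParent hdvd x)) ∈ R} :=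
        measure_mono fun φ hφ x hx => norm_sub_chessboardParent_le hdvd hφ hx
    _ ≤ ENNReal.ofReal ε ^ #(chessboardForest hdvd) :=
        Measure.pi_forest_le_pow _ hR hslice _ (chessboardHeight hdvd) _
          fun x hx => chessboardHeight_parent_lt hdvd hx
    _ = ENNReal.ofReal (ε ^ (#(chessboardForest hdvd) : ℝ)) := by
        rw [Real.rpow_natCast, ENNReal.ofReal_pow hε.le]
    _ ≤ ENNReal.ofReal (ε ^ ((3 / 4 : ℝ) * (L : ℝ) ^ 2 - 1 * L)) :=
        ENNReal.ofReal_le_ofReal (Real.rpow_le_rpow_of_exponent_ge hε (by linarith) hcard)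
end
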